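/- Let G be a graph on a partition P of [n+1], and let f, g : X → (ℝ^d)^n be two G-condensed maps such that every connected component S of G has a common base α (for both f and g) with f_i = g_i for every i ∈ α. Then the straight homotopy h : X × [0,1] → (ℝ^d)^n from f to g is G-condensed; in particular h is proper. -/

import Mathlib

open scoped BigOperators
open Finset

noncomputable section

namespace SinhaKnots

attribute [local instance] Classical.propDecidable

/-- `ℝ^d` with the Euclidean norm. -/
abbrev Rd (d : ℕ) := EuclideanSpace ℝ (Fin d)

/-- `(ℝ^d)^m` with the Euclidean norm. -/
abbrev Vec (m d : ℕ) := PiLp 2 (fun _ : Fin m => Rd d)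

/-- The first standard basis vector `u = (1,0,…,0)` of `ℝ^d`. -/
def uVec (d : ℕ) : Rd d := if h : 0 < d then EuclideanSpace.single ⟨0, h⟩ 1 else 0

/-- The second standard basis vector `v = (0,1,0,…,0)` of `ℝ^d`. -/
def vVec (d : ℕ) : Rd d := if h : 1 < d then EuclideanSpace.single ⟨1, h⟩ 1 else 0

/-- The first coordinate of a vector of `ℝ^d`. -/
def fst {d : ℕ} (x : Rd d) : ℝ := if h : 0 < d then x ⟨0, h⟩ else 0

/-- A partition of `[n+1] = {0,1,…,n+1}` into (at least two) nonempty consecutive intervals,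
encoded as a monotone surjection onto `Fin (p+2)`; the pieces are the fibers, totally
ordered via the index, and `p` is the number of non-extremal pieces. -/
structure IntervalPartition (n : ℕ) where
  p : ℕ
  toFun : Fin (n + 2) → Fin (p + 2)
  mono : Monotone toFun
  surj : Function.Surjective toFun

/-- `Q` is a subdivision of `P`: every piece of `Q` is contained in a piece of `P`,
and `Q ≠ P` (equivalently, `Q` has strictly more pieces). -/
def Subdivides {n : ℕ} (Q P : IntervalPartition n) : Prop :=
  (∀ i j, Q.toFun i = Q.toFun j → P.toFun i = P.toFun j) ∧ P.p < Q.p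

/-- The element `i+1` of `[n+1]`, corresponding to the `i`-th component of `(ℝ^d)^n`. -/
def elt (n : ℕ) (i : Fin n) : Fin (n + 2) := ⟨(i : ℕ) + 1, by omega⟩

/-- The finest partition of `[n+1]`, into singletons. -/
def finest (n : ℕ) : IntervalPartition n :=
  ⟨n, id, monotone_id, Function.surjective_id⟩

variable {n : ℕ}

/-- The piece of `P` with index `a`, as a finite set of elements of `[n+1]`. -/
def fiber (P : IntervalPartition n) (a : Fin (P.p + 2)) : Finset (Fin (n + 2)) :=
  Finset.univ.filter fun i => P.toFun i = a

lemma fiber_nonempty (P : IntervalPartition n) (a : Fin (P.p + 2)) : (fiber P a).Nonempty := by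
  obtain ⟨i, hi⟩ := P.surj a
  exact ⟨i, by simp [fiber, hi]⟩

/-- The minimal element of a piece. -/
def minElt (P : IntervalPartition n) (a : Fin (P.p + 2)) : Fin (n + 2) :=
  (fiber P a).min' (fiber_nonempty P a)

/-- The maximal element of a piece. -/
def maxElt (P : IntervalPartition n) (a : Fin (P.p + 2)) : Fin (n + 2) :=
  (fiber P a).max' (fiber_nonempty P a)

/-- `c_α = ∑_{i ∈ α} c_i`. -/
def cPiece (c : Fin (n + 2) → ℝ) (P : IntervalPartition n) (a : Fin (P.p + 2)) : ℝ :=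
  ∑ i ∈ fiber P a, c i

/-- `c_{≤α} = ∑_{γ < α} c_γ + c_α/2`. -/
def cLE (c : Fin (n + 2) → ℝ) (P : IntervalPartition n) (a : Fin (P.p + 2)) : ℝ :=
  (∑ i ∈ Finset.univ.filter fun i => P.toFun i < a, c i) + cPiece c P a / 2

/-- `c_{≥α} = ∑_{γ > α} c_γ + c_α/2`. -/
def cGE (c : Fin (n + 2) → ℝ) (P : IntervalPartition n) (a : Fin (P.p + 2)) : ℝ :=
  (∑ i ∈ Finset.univ.filter fun i => a < P.toFun i, c i) + cPiece c P a / 2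

/-- `c_{αβ} = ∑_{α < γ < β} c_γ + (c_α + c_β)/2`. -/
def cBetween (c : Fin (n + 2) → ℝ) (P : IntervalPartition n) (a b : Fin (P.p + 2)) : ℝ :=
  (∑ i ∈ Finset.univ.filter fun i => a < P.toFun i ∧ P.toFun i < b, c i)
    + (cPiece c P a + cPiece c P b) / 2

/-- The tuple `x` indexed by the non-extremal pieces, extended to all pieces by the fixed
values `x₀ = (-1+ρc_{α₀}/2)u` and `x_{p+1} = (1-ρc_{α_{p+1}}/2)u` on the extremal pieces. -/
def extTuple (ρ : ℝ) (c : Fin (n + 2) → ℝ) (P : IntervalPartition n) {d : ℕ}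
    (x : Vec P.p d) : Fin (P.p + 2) → Rd d := fun a =>
  if _h0 : (a : ℕ) = 0 then (-1 + ρ * cPiece c P 0 / 2) • uVec d
  else if _h1 : (a : ℕ) = P.p + 1 then
    (1 - ρ * cPiece c P (Fin.last (P.p + 1)) / 2) • uVec d
  else x ⟨(a : ℕ) - 1, by have := a.isLt; omega⟩

/-- The displacement (along `u`) of the center of the subsegment corresponding to the
`Q`-piece of `i` inside the segment of the `P`-piece of `i`, for a refinement `Q` of `P`. -/
def offsetQ (ρ : ℝ) (c : Fin (n + 2) → ℝ) (P Q : IntervalPartition n) (i : Fin (n + 2)) : ℝ :=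
  ρ * (- cPiece c P (P.toFun i) / 2
    + (∑ j ∈ Finset.univ.filter fun j => P.toFun j = P.toFun i ∧ Q.toFun j < Q.toFun i, c j)
    + cPiece c Q (Q.toFun i) / 2)

/-- The affine injection `e_{P,Q} : (ℝ^d)^p → (ℝ^d)^q` for a refinement `Q` of `P`. -/
def eMap (ρ : ℝ) (c : Fin (n + 2) → ℝ) (P Q : IntervalPartition n) {d : ℕ}
    (x : Vec P.p d) : Vec Q.p d := WithLp.toLp 2 <| fun b =>
  extTuple ρ c P x (P.toFun (minElt Q (elt Q.p b)))
    + offsetQ ρ c P Q (minElt Q (elt Q.p b)) • uVec d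

/-- The affine injection `e_P : (ℝ^d)^p → (ℝ^d)^n`. -/
def ePt (ρ : ℝ) (c : Fin (n + 2) → ℝ) (P : IntervalPartition n) {d : ℕ}
    (x : Vec P.p d) : Vec n d :=
  eMap ρ c P (finest n) x

/-- `ε_P = ε/8^{n-p}`. -/
def epsP (ε : ℝ) (P : IntervalPartition n) : ℝ := ε / 8 ^ (n - P.p)

/-- The open `ε_P`-neighborhood `ν_P` of `e_P((ℝ^d)^p)` in `(ℝ^d)^n`. -/
def nuP (ρ ε : ℝ) (c : Fin (n + 2) → ℝ) (P : IntervalPartition n) (d : ℕ) : Set (Vec n d) :=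
  {y | ∃ x : Vec P.p d, ‖y - ePt ρ c P x‖ < epsP ε P}

/-- The orthogonal projection `π_P : (ℝ^d)^n → (ℝ^d)^p`, i.e. the unique minimizer of
`x ↦ |y - e_P(x)|`; explicitly, its `α`-component is the average of `y_i - o_i u` over the
elements `i` of the piece `α`, where `o_i` is the offset of `i` in `e_P`. -/
def projP (ρ : ℝ) (c : Fin (n + 2) → ℝ) (P : IntervalPartition n) {d : ℕ}
    (y : Vec n d) : Vec P.p d := WithLp.toLp 2 <| fun a =>
  ((Finset.univ.filter fun i : Fin n => P.toFun (elt n i) = elt P.p a).card : ℝ)⁻¹ •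
    ∑ i ∈ Finset.univ.filter fun i : Fin n => P.toFun (elt n i) = elt P.p a,
      (y i - offsetQ ρ c P (finest n) (elt n i) • uVec d)

/-- The component of a tuple `x ∈ (ℝ^d)^m` at a non-extremal vertex index `w` (and `0` at
the extremal indices, where there is no component). -/
def comp {m d : ℕ} (x : Vec m d) (w : Fin (m + 2)) : Rd d :=
  if h : 0 < (w : ℕ) ∧ (w : ℕ) < m + 1 then x ⟨(w : ℕ) - 1, by omega⟩ else 0

/-- `d_{αβ}(P) = ρ c_{αβ} - ε_P`. -/
def dBound (ρ ε : ℝ) (c : Fin (n + 2) → ℝ) (P : IntervalPartition n)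
    (a b : Fin (P.p + 2)) : ℝ :=
  ρ * cBetween c P a b - epsP ε P

/-- `D_{αβ} = {x : |x_α - x_β| ≤ d_{αβ}(P)}`. -/
def Dset (ρ ε : ℝ) (c : Fin (n + 2) → ℝ) (P : IntervalPartition n) (d : ℕ)
    (a b : Fin (P.p + 2)) : Set (Vec P.p d) :=
  {x | ‖comp x a - comp x b‖ ≤ dBound ρ ε c P a b}

/-- `E_α`. -/
def Eset (ρ ε : ℝ) (c : Fin (n + 2) → ℝ) (P : IntervalPartition n) (d : ℕ)
    (a : Fin (P.p + 2)) : Set (Vec P.p d) :=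
  {x | 1 - ρ * cPiece c P a / 2 + epsP ε P ≤ ‖comp x a‖
    ∨ fst (comp x a) ≤ -1 + ρ * cLE c P a - epsP ε P
    ∨ 1 - ρ * cGE c P a + epsP ε P ≤ fst (comp x a)}

/-- `E_P = ⋃_α E_α` over the non-extremal pieces `α`. -/
def EsetP (ρ ε : ℝ) (c : Fin (n + 2) → ℝ) (P : IntervalPartition n) (d : ℕ) :
    Set (Vec P.p d) :=
  ⋃ a ∈ {a : Fin (P.p + 2) | 0 < (a : ℕ) ∧ (a : ℕ) < P.p + 1}, Eset ρ ε c P d a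

/-- The configuration space `E(P) ⊂ (ℝ^d)^p`. -/
def Econf (ρ : ℝ) (c : Fin (n + 2) → ℝ) (P : IntervalPartition n) (d : ℕ) :
    Set (Vec P.p d) :=
  {x | (∀ w : Fin (P.p + 2), 0 < (w : ℕ) → (w : ℕ) < P.p + 1 →
          ‖comp x w‖ ≤ 1 - ρ * cPiece c P w / 2 ∧
          -1 + ρ * cLE c P w ≤ fst (comp x w) ∧
          fst (comp x w) ≤ 1 - ρ * cGE c P w) ∧
       ∀ w w' : Fin (P.p + 2), 0 < (w : ℕ) → (w' : ℕ) < P.p + 1 → w < w' →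
          ρ * cBetween c P w w' ≤ ‖comp x w - comp x w'‖}

/-! ### Graphs -/

/-- A graph on a partition with `m` non-extremal pieces: a finite set of edges, each being a
pair of vertices (vertices are the pieces, i.e. elements of `Fin (m+2)`). -/
abbrev GraphOn (m : ℕ) := Finset (Fin (m + 2) × Fin (m + 2))

/-- The edges go between non-extremal vertices and are increasing pairs. -/
def IsGraphOn {m : ℕ} (G : GraphOn m) : Prop :=
  ∀ e ∈ G, 0 < (e.1 : ℕ) ∧ e.1 < e.2 ∧ (e.2 : ℕ) < m + 1

/-- Adjacency relation of a graph. -/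
def adj {m : ℕ} (G : GraphOn m) (a b : Fin (m + 2)) : Prop :=
  ∃ e ∈ G, (e.1 = a ∧ e.2 = b) ∨ (e.1 = b ∧ e.2 = a)

/-- `conn G a b` : `a` and `b` lie in the same connected component of `G`. -/
def conn {m : ℕ} (G : GraphOn m) : Fin (m + 2) → Fin (m + 2) → Prop :=
  Relation.ReflTransGen (adj G)

/-- A vertex is discrete if no edge is incident with it. -/
def IsDiscrete {m : ℕ} (G : GraphOn m) (a : Fin (m + 2)) : Prop :=
  ∀ e ∈ G, e.1 ≠ a ∧ e.2 ≠ a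

lemma adj_symm {m : ℕ} (G : GraphOn m) : Symmetric (adj G) := by
  rintro a b ⟨e, he, h⟩
  exact ⟨e, he, h.symm⟩

/-- Being in the same connected component is an equivalence relation. -/
def connSetoid {m : ℕ} (G : GraphOn m) : Setoid (Fin (m + 2)) where
  r := conn G
  iseqv := by
    refine ⟨fun _ => Relation.ReflTransGen.refl, ?_, fun h h' => h.trans h'⟩
    intro x y h
    induction h with
    | refl => exact Relation.ReflTransGen.refl
    | tail _ hab ih => exact Relation.ReflTransGen.head (adj_symm G hab) ih

/-- The number of connected components of a graph (all `m+2` vertices included). -/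
def ncomp {m : ℕ} (G : GraphOn m) : ℕ := Fintype.card (Quotient (connSetoid G))

/-- `e` is a bridge of `G` if removing it increases the number of connected components. -/
def IsBridge {m : ℕ} (G : GraphOn m) (e : Fin (m + 2) × Fin (m + 2)) : Prop :=
  e ∈ G ∧ ncomp G < ncomp (G.erase e)

/-! ### Condensed maps -/

/-- The convex hull of `{f_j(x) : j ∈ α}`. -/
def hullPoints {d : ℕ} (P : IntervalPartition n) {X : Type*} (f : X → Vec n d) (x : X)
    (a : Fin (P.p + 2)) : Set (Rd d) :=
  convexHull ℝ {q | ∃ j : Fin n, P.toFun (elt n j) = a ∧ q = f x j}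

/-- `a` is a base (of its connected component of `G`) for the map `f`. -/
def IsBase {d : ℕ} (P : IntervalPartition n) (G : GraphOn P.p) {X : Type*}
    (f : X → Vec n d) (a : Fin (P.p + 2)) : Prop :=
  (∀ x : X, ∀ b, conn G a b → ∀ i : Fin n, P.toFun (elt n i) = b →
      f x i ∈ hullPoints P f x a)
  ∧ ∀ e ∈ G, conn G a e.1 → ¬(e.1 < a ∧ e.2 < a)

/-- A map `f : X → (ℝ^d)^n` is `G`-condensed: it is proper and each connected component
of `G` has a base. -/
def IsCondensed {d : ℕ} (P : IntervalPartition n) (G : GraphOn P.p) {X : Type*}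
    [TopologicalSpace X] (f : X → Vec n d) : Prop :=
  IsProperMap f ∧ ∀ a : Fin (P.p + 2), ∃ b, conn G a b ∧ IsBase P G f b

/-- `⋂_{(α,β) ∈ E(G)} D_{αβ}`. -/
def interD (ρ ε : ℝ) (c : Fin (n + 2) → ℝ) (P : IntervalPartition n) (d : ℕ)
    (G : GraphOn P.p) : Set (Vec P.p d) :=
  ⋂ e ∈ G, Dset ρ ε c P d e.1 e.2

/-- `U_G`. -/
def Uset (ρ ε : ℝ) (c : Fin (n + 2) → ℝ) (P : IntervalPartition n) (d : ℕ)
    (G : GraphOn P.p) : Set (Vec n d) :=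
  (nuP ρ ε c P d)ᶜ ∪ (projP ρ c P) ⁻¹' (interD ρ ε c P d G)

/-- Product of the projections to the first coordinate. -/
def p1 {m d : ℕ} (y : Vec m d) : Fin m → ℝ := fun i => fst (y i)

/-- `U_G^1`. -/
def Uset1 (ρ ε : ℝ) (c : Fin (n + 2) → ℝ) (P : IntervalPartition n) (d : ℕ)
    (G : GraphOn P.p) : Set (Vec n d) :=
  (p1 ⁻¹' (p1 '' nuP ρ ε c P d))ᶜ
    ∪ p1 ⁻¹' (p1 '' ((projP ρ c P) ⁻¹' (interD ρ ε c P d G)))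

/-! ### Contractions and homotopies -/

/-- The translation vector `A_e(s)` of the `e`-contraction. -/
def Acontr {d : ℕ} (P : IntervalPartition n) (G : GraphOn P.p)
    (e : Fin (P.p + 2) × Fin (P.p + 2)) (s : ℝ) : Vec n d := WithLp.toLp 2 <| fun i =>
  if conn (G.erase e) (P.toFun (elt n i)) e.1 then s • vVec d
  else if conn (G.erase e) (P.toFun (elt n i)) e.2 then -(s • vVec d) else 0

/-- The `e`-contraction `F(x,s) = f(x) + A_e(s)` of `f` for `G`. -/
def econtr {d : ℕ} (P : IntervalPartition n) (G : GraphOn P.p)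
    (e : Fin (P.p + 2) × Fin (P.p + 2)) {X : Type*} (f : X → Vec n d) :
    X × ↥(Set.Ici (0 : ℝ)) → Vec n d :=
  fun q => f q.1 + Acontr P G e (q.2 : ℝ)

/-- The `(e,e')`-contraction `F(x,s₁,s₂) = f(x) + A_e(s₁) + A_{e'}(s₂)` of `f` for `G`. -/
def eecontr {d : ℕ} (P : IntervalPartition n) (G : GraphOn P.p)
    (e e' : Fin (P.p + 2) × Fin (P.p + 2)) {X : Type*} (f : X → Vec n d) :
    X × ↥(Set.Ici (0 : ℝ)) × ↥(Set.Ici (0 : ℝ)) → Vec n d :=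
  fun q => f q.1 + Acontr P G e (q.2.1 : ℝ) + Acontr P G e' (q.2.2 : ℝ)

/-- The `(i,σ)`-contraction of a map `F` (σ = ±1): add `σsu` to the `i`-th component and
`-σsu` to the `(i+1)`-th component. Components are numbered `1,…,m` (the `k`-th coordinate
of `Vec m d` is component number `k+1`). -/
def icontr {m d : ℕ} {Y : Type*} (F : Y → Vec m d) (i : ℕ) (σ : ℝ) :
    Y × ↥(Set.Ici (0 : ℝ)) → Vec m d :=
  fun q => WithLp.toLp 2 <| fun k => F q.1 k +
    (if (k : ℕ) + 1 = i then σ * (q.2 : ℝ)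
     else if (k : ℕ) + 1 = i + 1 then -(σ * (q.2 : ℝ)) else 0) • uVec d

/-- The straight homotopy from `f` to `g`. -/
def straightH {V : Type*} [AddCommGroup V] [Module ℝ V] {Y : Type*} (f g : Y → V) :
    Y × ↥(Set.Icc (0 : ℝ) 1) → V :=
  fun q => (1 - (q.2 : ℝ)) • f q.1 + (q.2 : ℝ) • g q.1

/-! ### Merging pieces (the face operations δ) -/

/-- Value of the vertex map merging the pieces (0-based) `k` and `k+1`. -/
def vmapVal (m k : ℕ) (a : ℕ) : ℕ :=
  if m = 0 then a else min (if a ≤ k then a else a - 1) m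

/-- The vertex map of the merge, `Fin (m+2) → Fin (m-1+2)`. -/
def vmapFin (m k : ℕ) (a : Fin (m + 2)) : Fin (m - 1 + 2) :=
  ⟨vmapVal m k (a : ℕ), by have := a.isLt; unfold vmapVal; split <;> omega⟩

/-- The partition `δ_kP` obtained from `P` by uniting its `(k+1)`-th and `(k+2)`-th pieces
(i.e. the pieces of 0-based indices `k` and `k+1`). -/
def deltaPart (P : IntervalPartition n) (k : ℕ) : IntervalPartition n where
  p := P.p - 1
  toFun := fun i => vmapFin P.p k (P.toFun i)
  mono := by
    intro a b hab
    have h2 : (P.toFun a : ℕ) ≤ (P.toFun b : ℕ) := P.mono hab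
    simp only [vmapFin, Fin.mk_le_mk, vmapVal]
    split_ifs <;> omega
  surj := by
    intro b
    have hb := b.isLt
    by_cases h0 : P.p = 0
    · obtain ⟨i, hi⟩ := P.surj ⟨(b : ℕ), by omega⟩
      refine ⟨i, Fin.ext ?_⟩
      simp only [vmapFin, vmapVal, hi, h0, if_true]
    · rcases le_or_gt (b : ℕ) k with hbk | hbk
      · obtain ⟨i, hi⟩ := P.surj ⟨(b : ℕ), by omega⟩
        refine ⟨i, Fin.ext ?_⟩
        simp only [vmapFin, vmapVal, hi, h0, if_false]
        split_ifs <;> omega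
      · obtain ⟨i, hi⟩ := P.surj ⟨(b : ℕ) + 1, by omega⟩
        refine ⟨i, Fin.ext ?_⟩
        simp only [vmapFin, vmapVal, hi, h0, if_false]
        split_ifs <;> omega

/-- For a refinement pair (`Q` refines `P`): the piece of `P` containing a given piece of
`Q`. -/
def pieceMap (Q P : IntervalPartition n) : Fin (Q.p + 2) → Fin (P.p + 2) :=
  fun b => P.toFun (minElt Q b)

/-- The image graph on a coarser partition (e.g. `δ_iG` on `δ_iQ`). -/
def pushGraph (Q P : IntervalPartition n) (G : GraphOn Q.p) : GraphOn P.p :=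
  G.image fun e => (pieceMap Q P e.1, pieceMap Q P e.2)

/-- The image graph is an honest graph: no loops nor double edges are created
(injectivity of the edge map) and no edge is incident with an extremal piece. -/
def GoodPush (Q P : IntervalPartition n) (G : GraphOn Q.p) : Prop :=
  Set.InjOn (fun e : Fin (Q.p + 2) × Fin (Q.p + 2) => (pieceMap Q P e.1, pieceMap Q P e.2)) ↑G
  ∧ IsGraphOn (pushGraph Q P G)


/-- if `f, g` are `G`-condensed maps such that every connected component of
`G` has a common base `α` with `f_i = g_i` for all `i ∈ α`, then the straight homotopy from
`f` to `g` is `G`-condensed; in particular it is proper. -/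
theorem statement_10
    (n d : ℕ) (hn : 1 ≤ n) (hd : 1 ≤ d) (ρ ε : ℝ) (c : Fin (n + 2) → ℝ)
    (hρ0 : 0 < ρ) (hρ1 : ρ < 1) (hε0 : 0 < ε) (hc : ∀ i, 0 < c i)
    (hsum : ∑ i, c i = 1) (hc0 : 100 * ε / ρ < c 0)
    (hci : ∀ i : Fin (n + 2), 1 ≤ (i : ℕ) →
      100 * (ε / ρ + ∑ j ∈ Finset.univ.filter (fun j : Fin (n + 2) => (j : ℕ) < (i : ℕ)), c j)
        < c i)
    (P : IntervalPartition n) (G : GraphOn P.p) (hG : IsGraphOn G)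
    (X : Type) [TopologicalSpace X] (f g : X → Vec n d)
    (hf : IsCondensed P G f) (hg : IsCondensed P G g)
    (hcommon : ∀ a : Fin (P.p + 2), ∃ b, conn G a b ∧
      IsBase P G f b ∧ IsBase P G g b ∧
      ∀ i : Fin n, P.toFun (elt n i) = b → ∀ x : X, f x i = g x i) :
    IsCondensed P G (straightH f g) ∧ IsProperMap (straightH f g) := by
  classical
  obtain ⟨hfprop, -⟩ := hf
  obtain ⟨hgprop, -⟩ := hg
  have hfc := hfprop.continuous
  have hgc := hgprop.continuous
  have hcont : Continuous (straightH f g) := by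
    unfold straightH
    exact ((continuous_const.sub (continuous_subtype_val.comp continuous_snd)).smul
      (hfc.comp continuous_fst)).add
      ((continuous_subtype_val.comp continuous_snd).smul (hgc.comp continuous_fst))
  have ht0 : ∀ q : X × ↥(Set.Icc (0:ℝ) 1), 0 ≤ (q.2 : ℝ) := fun q => q.2.2.1
  have ht1 : ∀ q : X × ↥(Set.Icc (0:ℝ) 1), (q.2 : ℝ) ≤ 1 := fun q => q.2.2.2
  -- value of the straight homotopy on a piece where `f = g`
  have hval : ∀ (b : Fin (P.p + 2)),
      (∀ i : Fin n, P.toFun (elt n i) = b → ∀ x : X, f x i = g x i) →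
      ∀ q : X × ↥(Set.Icc (0:ℝ) 1), ∀ j : Fin n, P.toFun (elt n j) = b →
        straightH f g q j = f q.1 j := by
    intro b hb q j hj
    show (1 - (q.2 : ℝ)) • f q.1 j + (q.2 : ℝ) • g q.1 j = f q.1 j
    rw [← hb j hj q.1, ← add_smul, sub_add_cancel, one_smul]
  -- hull sets of `f` and `g` agree on a common base
  have hullfg : ∀ b : Fin (P.p + 2),
      (∀ i : Fin n, P.toFun (elt n i) = b → ∀ x : X, f x i = g x i) →
      ∀ x : X, hullPoints P g x b = hullPoints P f x b := by
    intro b hb x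
    unfold hullPoints
    congr 1
    ext q
    constructor
    · rintro ⟨j, hj, rfl⟩; exact ⟨j, hj, (hb j hj x).symm⟩
    · rintro ⟨j, hj, rfl⟩; exact ⟨j, hj, hb j hj x⟩
  -- hull sets of the homotopy agree with those of `f` on a common base
  have hullh : ∀ b : Fin (P.p + 2),
      (∀ i : Fin n, P.toFun (elt n i) = b → ∀ x : X, f x i = g x i) →
      ∀ q : X × ↥(Set.Icc (0:ℝ) 1),
        hullPoints P (straightH f g) q b = hullPoints P f q.1 b := by
    intro b hb q
    unfold hullPoints
    congr 1
    ext y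
    constructor
    · rintro ⟨j, hj, rfl⟩; exact ⟨j, hj, hval b hb q j hj⟩
    · rintro ⟨j, hj, rfl⟩; exact ⟨j, hj, (hval b hb q j hj).symm⟩
  -- membership of homotopy values in the hull over a common base
  have hmem : ∀ q : X × ↥(Set.Icc (0:ℝ) 1), ∀ b : Fin (P.p + 2),
      IsBase P G f b → IsBase P G g b →
      (∀ i : Fin n, P.toFun (elt n i) = b → ∀ x : X, f x i = g x i) →
      ∀ β, conn G b β → ∀ i : Fin n, P.toFun (elt n i) = β →
      straightH f g q i ∈ hullPoints P f q.1 b := by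
    intro q b hbf hbg hb β hβ i hi
    have h1 : f q.1 i ∈ hullPoints P f q.1 b := hbf.1 q.1 β hβ i hi
    have h2 : g q.1 i ∈ hullPoints P g q.1 b := hbg.1 q.1 β hβ i hi
    rw [hullfg b hb q.1] at h2
    have hrepr : straightH f g q i
        = (1 - (q.2 : ℝ)) • f q.1 i + (q.2 : ℝ) • g q.1 i := rfl
    rw [hrepr]
    exact (convex_convexHull ℝ _) h1 h2 (by linarith [ht1 q]) (ht0 q) (by ring)
  -- the bases for the homotopy
  have hbase : ∀ a : Fin (P.p + 2), ∃ b, conn G a b ∧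
      IsBase P G (straightH f g) b := by
    intro a
    obtain ⟨b, hab, hbf, hbg, hb⟩ := hcommon a
    refine ⟨b, hab, ?_, hbf.2⟩
    intro q β hβ i hi
    rw [hullh b hb q]
    exact hmem q b hbf hbg hb β hβ i hi
  -- properness
  have hprop : IsProperMap (straightH f g) := by
    rw [isProperMap_iff_isCompact_preimage]
    refine ⟨hcont, fun K hK => ?_⟩
    obtain ⟨M, hM⟩ := hK.isBounded.subset_closedBall 0
    set M' := max M 0 with hM'def
    have hKball : K ⊆ Metric.closedBall 0 M' :=
      hM.trans (Metric.closedBall_subset_closedBall (le_max_left _ _))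
    have hM'0 : 0 ≤ M' := le_max_right _ _
    set R := Real.sqrt (n * M' ^ 2) with hRdef
    have hsub : straightH f g ⁻¹' K ⊆ (f ⁻¹' Metric.closedBall 0 R) ×ˢ Set.univ := by
      rintro ⟨x, t⟩ hq
      refine ⟨?_, trivial⟩
      have hqK : straightH f g (x, t) ∈ Metric.closedBall 0 M' := hKball hq
      have hnorm : ‖straightH f g (x, t)‖ ≤ M' := by
        rwa [Metric.mem_closedBall, dist_zero_right] at hqK
      have hcoord : ∀ j : Fin n, ‖straightH f g (x, t) j‖ ≤ M' := by
        intro j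
        refine le_trans ?_ hnorm
        have hsq := PiLp.norm_sq_eq_of_L2 (fun _ : Fin n => Rd d) (straightH f g (x, t))
        have hle : ‖straightH f g (x, t) j‖ ^ 2 ≤ ‖straightH f g (x, t)‖ ^ 2 := by
          rw [hsq]
          exact Finset.single_le_sum (f := fun i => ‖straightH f g (x, t) i‖ ^ 2)
            (fun i _ => sq_nonneg _) (Finset.mem_univ j)
        nlinarith [norm_nonneg (straightH f g (x, t)), norm_nonneg (straightH f g (x, t) j)]
      have hfcoord : ∀ i : Fin n, ‖f x i‖ ≤ M' := by
        intro i
        obtain ⟨b, hab, hbf, hbg, hb⟩ := hcommon (P.toFun (elt n i))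
        have hba : conn G b (P.toFun (elt n i)) :=
          (connSetoid G).iseqv.symm hab
        have hmemf : f x i ∈ hullPoints P f x b := hbf.1 x _ hba i rfl
        have hsubball : hullPoints P f x b ⊆ Metric.closedBall (0 : Rd d) M' := by
          apply convexHull_min ?_ (convex_closedBall _ _)
          rintro y ⟨j, hj, rfl⟩
          rw [Metric.mem_closedBall, dist_zero_right]
          have hj' : straightH f g (x, t) j = f x j := hval b hb (x, t) j hj
          rw [← hj']
          exact hcoord j
        have := hsubball hmemf
        rwa [Metric.mem_closedBall, dist_zero_right] at this
      rw [Set.mem_preimage, Metric.mem_closedBall, dist_zero_right]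
      have hsq : ‖f x‖ ^ 2 ≤ (n : ℝ) * M' ^ 2 := by
        rw [PiLp.norm_sq_eq_of_L2]
        calc ∑ i, ‖f x i‖ ^ 2 ≤ ∑ _i : Fin n, M' ^ 2 :=
              Finset.sum_le_sum (fun i _ => pow_le_pow_left₀ (norm_nonneg _) (hfcoord i) 2)
          _ = (n : ℝ) * M' ^ 2 := by
              simp [Finset.sum_const, Finset.card_univ, nsmul_eq_mul]
      calc ‖f x‖ = Real.sqrt (‖f x‖ ^ 2) := (Real.sqrt_sq (norm_nonneg _)).symm
        _ ≤ R := Real.sqrt_le_sqrt hsq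
    exact ((hfprop.isCompact_preimage (isCompact_closedBall 0 R)).prod
      isCompact_univ).of_isClosed_subset (hK.isClosed.preimage hcont) hsub
  exact ⟨⟨hprop, hbase⟩, hprop⟩

end SinhaKnots
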